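/- Assume f̲_0 = f̄_0 = 0, f̄_j = 1 for all j ∈ {1,…,n}, and 0 ≤ d < 1. Let c^x, c^f ∈ ℝ^n with c^x_i ≥ 0 for all i, and define z = min_{i∈{1,…,n}} (c^x_i + c^f_i) + min_{j∈{1,…,n}} (c^x_j − c^f_j). If z > 0, then no point (x,f) ∈ S that has two distinct indices i, j ∈ {1,…,n} with f_i = 1 and f_j = −1 can minimize the linear function (x,f) ↦ ∑_{i=1}^n (c^x_i x_i + c^f_i f_i) over S; i.e., for any such (x,f) there exists (x*,f*) ∈ S with strictly smaller objective value. -/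

import Mathlib

/-!
Closing the two lines that carry the flows `+1` and `-1` keeps the total flow `d`, so the point
stays in `S`. Both lines are open (`x_i = x_j = 1`), so closing them lowers the cost by
`(cˣ_i + c^f_i) + (cˣ_j - c^f_j) ≥ z > 0`.
-/

open Finset Function

theorem Fintype.sum_update_zero {ι M : Type*} [Fintype ι] [DecidableEq ι] [AddCommGroup M]
    (f : ι → M) (i : ι) : ∑ k, update f i 0 k = ∑ k, f k - f i := by
  rw [sum_update_of_mem (mem_univ i), zero_add, sum_eq_sum_sdiff_singleton_add (mem_univ i) f,
    add_sub_cancel_right]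

theorem Fintype.sum_update_update_zero {ι M : Type*} [Fintype ι] [DecidableEq ι]
    [AddCommGroup M] (f : ι → M) {i j : ι} (hij : i ≠ j) :
    ∑ k, update (update f i 0) j 0 k = ∑ k, f k - f i - f j := by
  rw [Fintype.sum_update_zero, Fintype.sum_update_zero, update_of_ne hij.symm]

def flowSet (n : ℕ) (d : ℝ) : Set ((Fin n → ℝ) × (Fin (n + 1) → ℝ)) :=
  {p | (∀ j, p.1 j = 0 ∨ p.1 j = 1) ∧ (∑ j, p.2 j) = d ∧ p.2 0 = 0 ∧
    ∀ j : Fin n, -(p.1 j) ≤ p.2 j.succ ∧ p.2 j.succ ≤ p.1 j}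

def closeLines {n : ℕ} (p : (Fin n → ℝ) × (Fin (n + 1) → ℝ)) (i j : Fin n) :
    (Fin n → ℝ) × (Fin (n + 1) → ℝ) :=
  (update (update p.1 i 0) j 0, update (update p.2 i.succ 0) j.succ 0)

theorem closeLines_snd_succ {n : ℕ} (p : (Fin n → ℝ) × (Fin (n + 1) → ℝ)) (i j k : Fin n) :
    (closeLines p i j).2 k.succ = update (update (fun l => p.2 l.succ) i 0) j 0 k := by
  simp only [closeLines, update_apply, Fin.succ_inj]

theorem closeLines_mem_flowSet {n : ℕ} {d : ℝ} {p : (Fin n → ℝ) × (Fin (n + 1) → ℝ)}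
    (hp : p ∈ flowSet n d) {i j : Fin n} (hij : i ≠ j) (hfi : p.2 i.succ = 1)
    (hfj : p.2 j.succ = -1) : closeLines p i j ∈ flowSet n d := by
  obtain ⟨hx01, hsum, hf0, hbd⟩ := hp
  refine ⟨fun k => ?_, ?_, ?_, fun k => ?_⟩
  · simp only [closeLines, update_apply]
    split_ifs <;> simp [hx01 k]
  · rw [closeLines, Fintype.sum_update_update_zero _ (by simpa using hij), hfi, hfj, hsum]
    ring
  · simp [closeLines, (Fin.succ_ne_zero _).symm, hf0]
  · rw [closeLines_snd_succ]
    simp only [closeLines, update_apply]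
    split_ifs <;> simp [hbd k]

theorem cost_closeLines {n : ℕ} (cx cf : Fin n → ℝ) (p : (Fin n → ℝ) × (Fin (n + 1) → ℝ))
    {i j : Fin n} (hij : i ≠ j) :
    ∑ k, (cx k * (closeLines p i j).1 k + cf k * (closeLines p i j).2 k.succ) =
      ∑ k, (cx k * p.1 k + cf k * p.2 k.succ)
        - (cx i * p.1 i + cf i * p.2 i.succ) - (cx j * p.1 j + cf j * p.2 j.succ) := by
  rw [← Fintype.sum_update_update_zero (fun k => cx k * p.1 k + cf k * p.2 k.succ) hij]
  refine sum_congr rfl fun k _ => ?_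
  rw [closeLines_snd_succ]
  simp only [closeLines, update_apply]
  split_ifs <;> simp

theorem no_opposite_unit_flows_optimal_general (n : ℕ)
    (d : ℝ)
    (S : Set ((Fin n → ℝ) × (Fin (n + 1) → ℝ)))
    (hS : S = {p | (∀ j, p.1 j = 0 ∨ p.1 j = 1) ∧
      (∑ j, p.2 j) = d ∧ p.2 0 = 0 ∧
      ∀ j : Fin n, -(p.1 j) ≤ p.2 j.succ ∧ p.2 j.succ ≤ p.1 j})
    (cx cf : Fin n → ℝ)
    -- `i0` attains `min (cˣ + c^f)` and `j0` attains `min (cˣ - c^f)`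
    (i0 j0 : Fin n)
    (hi0 : ∀ k, cx i0 + cf i0 ≤ cx k + cf k)
    (hj0 : ∀ k, cx j0 - cf j0 ≤ cx k - cf k)
    (z : ℝ) (hz : z = (cx i0 + cf i0) + (cx j0 - cf j0)) (hzpos : 0 < z) :
    ∀ p ∈ S, ∀ i j : Fin n, i ≠ j → p.2 i.succ = 1 → p.2 j.succ = -1 →
      ∃ q ∈ S, (∑ k, (cx k * q.1 k + cf k * q.2 k.succ)) <
        (∑ k, (cx k * p.1 k + cf k * p.2 k.succ)) := by
  intro p hp i j hij hfi hfj
  change S = flowSet n d at hS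
  subst hS
  have hxi : p.1 i = 1 := (hp.1 i).resolve_left fun h => by linarith [(hp.2.2.2 i).2]
  have hxj : p.1 j = 1 := (hp.1 j).resolve_left fun h => by linarith [(hp.2.2.2 j).1]
  refine ⟨closeLines p i j, closeLines_mem_flowSet hp hij hfi hfj, ?_⟩
  rw [cost_closeLines cx cf p hij, hxi, hxj, hfi, hfj]
  linarith [hi0 i, hj0 j]

/-- Claim 1: if `z > 0`, no point of `S` with a `+1` flow and a
`-1` flow on two distinct lines can be optimal. -/
theorem no_opposite_unit_flows_optimal (n : ℕ) (hn : 1 ≤ n)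
    (d : ℝ) (hd0 : 0 ≤ d) (hd : d < 1)
    (S : Set ((Fin n → ℝ) × (Fin (n + 1) → ℝ)))
    (hS : S = {p | (∀ j, p.1 j = 0 ∨ p.1 j = 1) ∧
      (∑ j, p.2 j) = d ∧ p.2 0 = 0 ∧
      ∀ j : Fin n, -(p.1 j) ≤ p.2 j.succ ∧ p.2 j.succ ≤ p.1 j})
    (cx cf : Fin n → ℝ) (hcx : ∀ i, 0 ≤ cx i)
    -- `i0` attains `min (cˣ + c^f)` and `j0` attains `min (cˣ - c^f)`
    (i0 j0 : Fin n)
    (hi0 : ∀ k, cx i0 + cf i0 ≤ cx k + cf k)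
    (hj0 : ∀ k, cx j0 - cf j0 ≤ cx k - cf k)
    (z : ℝ) (hz : z = (cx i0 + cf i0) + (cx j0 - cf j0)) (hzpos : 0 < z) :
    ∀ p ∈ S, ∀ i j : Fin n, i ≠ j → p.2 i.succ = 1 → p.2 j.succ = -1 →
      ∃ q ∈ S, (∑ k, (cx k * q.1 k + cf k * q.2 k.succ)) <
        (∑ k, (cx k * p.1 k + cf k * p.2 k.succ)) :=
  no_opposite_unit_flows_optimal_general n d S hS cx cf i0 j0 hi0 hj0 z hz hzpos
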